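/- arXiv:math/0201174 — 2 statements merged into one kernel-verified Lean document; each statement's English description precedes it below -/
import Mathlib

section
/- Let M be a matroid on a linearly ordered ground set, let I be an NBC set and J an independent set with |I| = |J| = ℓ. Suppose τ is a permutation of J with Flag(J^τ) = Flag(I^id), where I^id lists I in increasing order. If, writing I = (i_1, ..., i_ℓ) increasingly and J^τ = (j_{τ(1)}, ..., j_{τ(ℓ)}), the largest index m with i_m ≠ j_{τ(m)} exists, then there is a circuit C of M with i_m, j_{τ(m)} ∈ C ⊆ {i_m, j_{τ(m)}, i_{m+1}, ..., i_ℓ}. -/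
open scoped BigOperators
open scoped Matroid

/-- A circuit: a minimal dependent set. -/
def IsCircuit {n : ℕ} (M : Matroid (Fin n)) (C : Finset (Fin n)) : Prop :=
  M.Dep ↑C ∧ ∀ D : Finset (Fin n), D ⊂ C → ¬ M.Dep ↑D

/-- A broken circuit: a circuit (of size > 1) with its minimum removed. -/
def IsBrokenCircuit {n : ℕ} (M : Matroid (Fin n)) (B : Finset (Fin n)) : Prop :=
  ∃ (C : Finset (Fin n)) (a : Fin n), IsCircuit M C ∧ 1 < C.card ∧ a ∈ C ∧
    (∀ b ∈ C, a ≤ b) ∧ B = C.erase a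

/-- A no-broken-circuit set. -/
def NBCSet {n : ℕ} (M : Matroid (Fin n)) (I : Finset (Fin n)) : Prop :=
  M.Indep ↑I ∧ ∀ B ⊆ I, ¬ IsBrokenCircuit M B

/-- A unidependent set: contains exactly one circuit. -/
def Unidep {n : ℕ} (M : Matroid (Fin n)) (U : Finset (Fin n)) : Prop :=
  ↑U ⊆ M.E ∧ ∃! C : Finset (Fin n), C ⊆ U ∧ IsCircuit M C

/-- x is a loop. -/
def IsLoopM {n : ℕ} (M : Matroid (Fin n)) (x : Fin n) : Prop := M.Dep {x}

/-- Deletion of a single element. -/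
noncomputable def mdel {n : ℕ} (M : Matroid (Fin n)) (x : Fin n) : Matroid (Fin n) :=
  M ↾ (M.E \ {x})

/-- Contraction of a single element, via duality. -/
noncomputable def mcon {n : ℕ} (M : Matroid (Fin n)) (x : Fin n) : Matroid (Fin n) :=
  (M✶ ↾ (M.E \ {x}))✶

open scoped Classical in
/-- The rank of a finite set: maximal cardinality of an independent subset. -/
noncomputable def rkFin {n : ℕ} (M : Matroid (Fin n)) (U : Finset (Fin n)) : ℕ :=
  (U.powerset.filter fun I : Finset (Fin n) => M.Indep (↑I : Set (Fin n))).sup Finset.card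

/-- A simple matroid with ground set everything. -/
def SimpleGround {n : ℕ} (M : Matroid (Fin n)) : Prop :=
  M.E = Set.univ ∧ (∀ i : Fin n, M.Indep {i}) ∧
    ∀ i j : Fin n, i ≠ j → M.Indep {i, j}

/-- Number of inversions of a list. -/
def listInv {n : ℕ} : List (Fin n) → ℕ
  | [] => 0
  | a :: t => (t.countP fun b => decide (b < a)) + listInv t

/-- χ evaluated on an ordered set, with the sign convention χ(X^σ) = sgn(σ) χ(X). -/
def ochi {n : ℕ} {K : Type*} [Field K] (χ : Finset (Fin n) → K) (l : List (Fin n)) : K :=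
  (-1 : K) ^ listInv l * χ l.toFinset

/-- The flag of flats associated to an ordered set: closures of its suffixes. -/
def flagOf {n : ℕ} (M : Matroid (Fin n)) (l : List (Fin n)) : List (Set (Fin n)) :=
  l.tails.map fun t => M.closure ↑t.toFinset

/-- An element `b` is active in `I`: it lies in `cl(I) \ I` and is the minimum of the
(unique) circuit contained in `I ∪ {b}`. -/
def ActiveIn {n : ℕ} (M : Matroid (Fin n)) (I : Finset (Fin n)) (b : Fin n) : Prop :=
  b ∈ M.closure ↑I ∧ b ∉ I ∧
    ∃ C : Finset (Fin n), C ⊆ insert b I ∧ IsCircuit M C ∧ ∀ c ∈ C, b ≤ c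


/-- An inactive unidependent set: `min C(U)` is the minimal active element of
`U \\ min C(U)`. -/
def InactiveUnidep {n : ℕ} (M : Matroid (Fin n)) (U : Finset (Fin n)) : Prop :=
  Unidep M U ∧ ∃ (C : Finset (Fin n)) (a : Fin n), C ⊆ U ∧ IsCircuit M C ∧ a ∈ C ∧
    (∀ b ∈ C, a ≤ b) ∧ ∀ b : Fin n, ActiveIn M (U.erase a) b → a ≤ b

section Alg

variable {n : ℕ} {K : Type*} [Field K]

/-- The defining relations of the graded algebra `E`: squares of generators vanish and
generators commute up to the nonzero scalars `β i j` (for `i < j`). -/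
inductive ERel (n : ℕ) (K : Type*) [Field K] (β : Fin n → Fin n → K) :
    FreeAlgebra K (Fin n) → FreeAlgebra K (Fin n) → Prop
  | sq (i : Fin n) : ERel n K β (FreeAlgebra.ι K i * FreeAlgebra.ι K i) 0
  | comm {i j : Fin n} (h : i < j) :
      ERel n K β (FreeAlgebra.ι K j * FreeAlgebra.ι K i)
        (β i j • (FreeAlgebra.ι K i * FreeAlgebra.ι K j))

/-- The algebra `E` generated by `e_1, …, e_n` with `e_i² = 0`, `e_j e_i = β i j • e_i e_j`. -/
abbrev EAlg (n : ℕ) (K : Type*) [Field K] (β : Fin n → Fin n → K) := RingQuot (ERel n K β)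

/-- The generator `e_i` of `E`. -/
noncomputable def gen (β : Fin n → Fin n → K) (i : Fin n) : EAlg n K β :=
  RingQuot.mkAlgHom K (ERel n K β) (FreeAlgebra.ι K i)

/-- `e_X`: the product of the generators indexed by `X`, in increasing order. -/
noncomputable def eset (β : Fin n → Fin n → K) (X : Finset (Fin n)) : EAlg n K β :=
  ((X.sort (· ≤ ·)).map (gen β)).prod

/-- The χ-boundary `∂e_X = Σ_p (-1)^p χ(X \ i_p) e_{X \ i_p}` (with `X = {i_1 < … < i_m}`,
`p` running from 1 to m). -/
noncomputable def bdry (β : Fin n → Fin n → K) (χ : Finset (Fin n) → K)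
    (X : Finset (Fin n)) : EAlg n K β :=
  ((X.sort (· ≤ ·)).zipIdx.map fun pi =>
    ((-1 : K) ^ (pi.2 + 1) * χ (X.erase pi.1)) • eset β (X.erase pi.1)).sum

end Alg

section Chi

variable {n : ℕ} {K : Type*} [Field K]

/-- Condition (UC1). -/
def UC1 (M : Matroid (Fin n)) (χ : Finset (Fin n) → K) : Prop :=
  ∀ I : Finset (Fin n), χ I ≠ 0 ↔ M.Indep ↑I

/-- Condition (UC2). -/
def UC2 (β : Fin n → Fin n → K) (M : Matroid (Fin n)) (χ : Finset (Fin n) → K) : Prop :=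
  ∀ U U' : Finset (Fin n), Unidep M U → Unidep M U' → U' ⊆ U →
    ∃ ε : K, ε ≠ 0 ∧ bdry β χ U = ε • (bdry β χ U' * eset β (U \ U'))

/-- The (right) ideal `I_χ(M)` of `E`, as a `K`-subspace: it is spanned by the products
of the boundaries of circuits of size `> 1` (and of the generators indexed by loops)
with arbitrary elements of `E`. -/
noncomputable def chiIdeal (β : Fin n → Fin n → K) (M : Matroid (Fin n))
    (χ : Finset (Fin n) → K) : Submodule K (EAlg n K β) :=
  Submodule.span K
    ({ y | ∃ C : Finset (Fin n), IsCircuit M C ∧ 1 < C.card ∧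
        ∃ z : EAlg n K β, y = bdry β χ C * z } ∪
     { y | ∃ i : Fin n, IsCircuit M {i} ∧ ∃ z : EAlg n K β, y = gen β i * z })

/-- The χ-algebra `A_χ(M) = E / I_χ(M)` (as a `K`-vector space). -/
abbrev AChi (β : Fin n → Fin n → K) (M : Matroid (Fin n)) (χ : Finset (Fin n) → K) :=
  EAlg n K β ⧸ chiIdeal β M χ

/-- The residue class `[e_X]` in `A_χ(M)`. -/
noncomputable def cls (β : Fin n → Fin n → K) (M : Matroid (Fin n))
    (χ : Finset (Fin n) → K) (X : Finset (Fin n)) : AChi β M χ :=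
  Submodule.Quotient.mk (eset β X)

/-- The induced map `χ_{M/x}`, `I ↦ χ(I * x)`. -/
def chiC (χ : Finset (Fin n) → K) (x : Fin n) : Finset (Fin n) → K :=
  fun I => ochi χ (I.sort (· ≤ ·) ++ [x])

/-- Iterated single-element contraction along a list (the head is contracted last). -/
noncomputable def contrList (M : Matroid (Fin n)) : List (Fin n) → Matroid (Fin n)
  | [] => M
  | x :: t => mcon (contrList M t) x

/-- Iterated induced `χ` along a list. -/
def chiL (χ : Finset (Fin n) → K) : List (Fin n) → (Finset (Fin n) → K)
  | [] => χ
  | x :: t => chiC (chiL χ t) x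

/-- The iterated residue `p_{I^σ} = p_{i_{σ(1)}} ∘ ⋯ ∘ p_{i_{σ(ℓ)}}` associated to a family
`P` of single-element residue maps and an ordered set (a list). -/
noncomputable def pIter (β : Fin n → Fin n → K)
    (P : ∀ (M : Matroid (Fin n)) (χ : Finset (Fin n) → K) (x : Fin n),
      AChi β M χ →ₗ[K] AChi β (mcon M x) (chiC χ x))
    (M : Matroid (Fin n)) (χ : Finset (Fin n) → K) :
    (l : List (Fin n)) → (AChi β M χ →ₗ[K] AChi β (contrList M l) (chiL χ l))
  | [] => LinearMap.id
  | x :: t => (P (contrList M t) (chiL χ t) x).comp (pIter β P M χ t)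

/-- The defining property of the residue map `p_x` on (classes of) independent sets. -/
def ResFormula (β : Fin n → Fin n → K)
    (P : ∀ (M : Matroid (Fin n)) (χ : Finset (Fin n) → K) (x : Fin n),
      AChi β M χ →ₗ[K] AChi β (mcon M x) (chiC χ x)) : Prop :=
  ∀ (M : Matroid (Fin n)) (χ : Finset (Fin n) → K) (x : Fin n), ¬ IsLoopM M x →
    ∀ I : Finset (Fin n), M.Indep ↑I →
      (x ∈ I → P M χ x (cls β M χ I) = cls β (mcon M x) (chiC χ x) (I.erase x)) ∧
      (∀ y ∈ I, IsCircuit M {x, y} → P M χ x (cls β M χ I) =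
        (ochi χ ((I.erase y).sort (· ≤ ·) ++ [x]) /
          ochi χ ((I.erase y).sort (· ≤ ·) ++ [y])) •
            cls β (mcon M x) (chiC χ x) (I.erase y)) ∧
      (x ∉ I → (∀ y ∈ I, ¬ IsCircuit M {x, y}) → P M χ x (cls β M χ I) = 0)

end Chi

/-!
Write `i = i_m`, `j = j_{τ(m)}` and `T = {i_{m+1}, …, i_ℓ}`, the common tail of both orderings.
The flags agree at level `m`, so `cl({j} ∪ T) = cl({i} ∪ T)`; hence `j` lies in the closure of the
independent set `{i} ∪ T`, and its fundamental circuit there contains `i`, since otherwise `j`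
would already be spanned by `T`, contradicting the independence of `{j} ∪ T`.
-/

theorem List.drop_eq_drop_of_getElem_eq {α : Type*} {l₁ l₂ : List α}
    (hlen : l₁.length = l₂.length) (k : ℕ)
    (h : ∀ q (h₁ : q < l₁.length) (h₂ : q < l₂.length), k ≤ q → l₁[q] = l₂[q]) :
    l₁.drop k = l₂.drop k :=
  List.ext_getElem (by simp [hlen]) fun q h₁ h₂ => by
    simpa using h (k + q) (by simp at h₁; omega) (by simp at h₂; omega) (by omega)

theorem Matroid.Indep.exists_isCircuit_of_mem_closure_insert {α : Type*}
    {M : Matroid α} {i j : α} {T : Set α} (hiT : M.Indep (insert i T))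
    (hjT : M.Indep (insert j T)) (hj : j ∈ M.closure (insert i T)) (hjiT : j ∉ insert i T) :
    ∃ C, M.IsCircuit C ∧ i ∈ C ∧ j ∈ C ∧ C ⊆ insert i (insert j T) := by
  refine ⟨M.fundCircuit j (insert i T), hiT.fundCircuit_isCircuit hj hjiT, ?_,
    M.mem_fundCircuit j _, (M.fundCircuit_subset_insert j _).trans ?_⟩
  · rw [hiT.mem_fundCircuit_iff hj hjiT]
    refine hjT.subset ?_
    rw [Set.insert_comm]
    exact Set.sdiff_singleton_subset_iff.mpr subset_rfl
  · rw [Set.insert_comm]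

theorem isCircuit_of_isCircuit_coe {n : ℕ} {M : Matroid (Fin n)} {C : Finset (Fin n)}
    (hC : M.IsCircuit ↑C) : IsCircuit M C :=
  ⟨hC.dep, fun _ hD => (hC.ssubset_indep (Finset.coe_ssubset.mpr hD)).not_dep⟩

theorem closure_drop_eq_of_flagOf_eq {n : ℕ} {M : Matroid (Fin n)} {l₁ l₂ : List (Fin n)}
    (h : flagOf M l₁ = flagOf M l₂) (m : ℕ) (hm₁ : m ≤ l₁.length) (hm₂ : m ≤ l₂.length) :
    M.closure ↑(l₁.drop m).toFinset = M.closure ↑(l₂.drop m).toFinset := by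
  have := congrArg (·[m]?) h
  simp only [flagOf, List.getElem?_map] at this
  rw [List.getElem?_eq_getElem (by simpa [Nat.lt_succ_iff]),
    List.getElem?_eq_getElem (by simpa [Nat.lt_succ_iff])] at this
  simpa using this

/-- if `I` is NBC, `J` independent with `Flag(J^τ) = Flag(I)` and `m` is the
largest index of disagreement, then there is a circuit
`C ⊆ {i_m, j_{τ(m)}, i_{m+1}, …, i_ℓ}` containing `i_m` and `j_{τ(m)}`. -/
theorem flag_mismatch_circuit {n : ℕ} (M : Matroid (Fin n)) (ℓ : ℕ)
    (I J : Finset (Fin n))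
    (hI : NBCSet M I) (hJ : M.Indep ↑J)
    (lj : List (Fin n)) (hnd : lj.Nodup) (hjt : lj.toFinset = J)
    (hflag : flagOf M lj = flagOf M (I.sort (· ≤ ·)))
    (m : ℕ) (hm : m < ℓ) (hlen : lj.length = ℓ) (hilen : (I.sort (· ≤ ·)).length = ℓ)
    (hmne : (I.sort (· ≤ ·)).get ⟨m, by omega⟩ ≠ lj.get ⟨m, by omega⟩)
    (hafter : ∀ q : ℕ, m < q → ∀ hq : q < ℓ,
      (I.sort (· ≤ ·)).get ⟨q, by omega⟩ = lj.get ⟨q, by omega⟩) :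
    ∃ C : Finset (Fin n), IsCircuit M C ∧
      (I.sort (· ≤ ·)).get ⟨m, by omega⟩ ∈ C ∧ lj.get ⟨m, by omega⟩ ∈ C ∧
      C ⊆ insert ((I.sort (· ≤ ·)).get ⟨m, by omega⟩)
          (insert (lj.get ⟨m, by omega⟩) ((I.sort (· ≤ ·)).drop (m + 1)).toFinset) := by
  set li := I.sort (· ≤ ·)
  set i := li.get ⟨m, by omega⟩
  set j := lj.get ⟨m, by omega⟩
  set T := (li.drop (m + 1)).toFinset
  have htail : lj.drop (m + 1) = li.drop (m + 1) :=
    List.drop_eq_drop_of_getElem_eq (by omega) _ fun q _ hq hmq => (hafter q hmq (by omega)).symm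
  have hdrop_i : li.drop m = i :: li.drop (m + 1) := List.drop_eq_getElem_cons _
  have hdrop_j : lj.drop m = j :: li.drop (m + 1) := htail ▸ List.drop_eq_getElem_cons _
  have hcl : M.closure ↑(insert j T) = M.closure ↑(insert i T) := by
    simpa [hdrop_i, hdrop_j, T] using closure_drop_eq_of_flagOf_eq hflag m (by omega) (by omega)
  have hiT : M.Indep ↑(insert i T) := hI.1.subset <| Finset.coe_subset.mpr fun x hx => by
    have : x ∈ li.drop m := by simpa [hdrop_i, T] using hx
    simpa [li] using List.mem_of_mem_drop this
  have hjT : M.Indep ↑(insert j T) := hJ.subset <| Finset.coe_subset.mpr fun x hx => by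
    have : x ∈ lj.drop m := by simpa [hdrop_j, T] using hx
    simpa [← hjt] using List.mem_of_mem_drop this
  have hjT' : j ∉ T := by
    have := (hdrop_j ▸ hnd.sublist (List.drop_sublist m lj) :)
    simpa [T] using (List.nodup_cons.mp this).1
  have hjiT : j ∉ insert i T := by simp [hjT', Ne.symm hmne]
  have hjcl : j ∈ M.closure ↑(insert i T) :=
    hcl ▸ M.mem_closure_of_mem' (by simp) (hjT.subset_ground (by simp))
  obtain ⟨C, hC, hiC, hjC, hCsub⟩ :=
    Matroid.Indep.exists_isCircuit_of_mem_closure_insert (by simpa using hiT)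
      (by simpa using hjT) (by simpa using hjcl) (by simpa using hjiT)
  lift C to Finset (Fin n) using Set.toFinite C
  exact ⟨C, isCircuit_of_isCircuit_coe hC, hiC, hjC, by exact_mod_cast hCsub⟩
end

section
/- Let A_χ(M) be a χ-algebra for a matroid M on a linearly ordered ground set, and let e_J be a nonzero pure element of degree ℓ. Write [e_J] = Σ ξ(I,J)[e_I] over NBC sets I of size ℓ. Then ξ(I,J) ≠ 0 if and only if Flag(I) = Flag(J^τ) for some permutation τ, and in that case ξ(I,J) = χ(I)/χ(J^τ). In particular, in the Orlik-Solomon algebra ξ(I,J) = sgn(τ). -/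
open scoped BigOperators
open scoped Matroid

/-! Fix an NBC set `I` with increasing ordering `r`. Weight a set `X` by `1 / χ(X^τ)` if some
ordering `X^τ` has `Flag(X^τ) = Flag(r)` (such an ordering is unique), and by `0` otherwise.
Extended linearly over the coordinates in the spanning family `(e_X)`, this weight kills the
ideal `I_χ(M)`. It vanishes on dependent sets, so in `∂e_C · e_Z` only the case where `C ∪ Z`
is unidependent survives, and (UC2) turns that into `∂e_U` with `U` dependent and loopless.
If `U \ u` has a flag ordering `A w B`, then `w` is where `u` enters the flag, so `A u B` is a
flag ordering of `U \ w` and no other `U \ x` has one; the two surviving terms cancel because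
`u A w B` and `w A u B` differ by a transposition. Evaluating the induced functional on
`[e_J] = Σ ξ(I', J) [e_I']` gives `ξ(I, J) / χ(I)`, since two NBC sets with the same flag
coincide. -/

lemma List.Nodup.countP_eq_card_filter {α : Type*} [DecidableEq α] {l : List α} (hl : l.Nodup)
    (p : α → Prop) [DecidablePred p] :
    l.countP (fun a => decide (p a)) = (l.toFinset.filter p).card := by
  rw [List.countP_eq_length_filter, ← List.toFinset_card_of_nodup (hl.filter _)]
  congr 1
  ext; simp

lemma List.sum_map_zipIdx_of_pairwise {α M : Type*} [LinearOrder α] [AddCommMonoid M]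
    {s : List α} (hs : s.Pairwise (· < ·)) (f : α × ℕ → M) :
    (s.zipIdx.map f).sum = ∑ x ∈ s.toFinset, f (x, s.countP (· < x)) := by
  induction s generalizing f with
  | nil => simp
  | cons a t ih =>
    rw [List.pairwise_cons] at hs
    have ha : a ∉ t.toFinset := fun h => (hs.1 a (List.mem_toFinset.1 h)).false
    rw [List.zipIdx_cons', List.map_cons, List.sum_cons, List.map_map, ih hs.2,
      List.toFinset_cons, Finset.sum_insert ha]
    congr 1
    · rw [List.countP_cons_of_neg (by simp), List.countP_eq_zero.2 fun x hx => by
        simpa using (hs.1 x hx).asymm]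
    · refine Finset.sum_congr rfl fun x hx => ?_
      simp [hs.1 x (List.mem_toFinset.1 hx)]

lemma List.coe_toFinset_subset_coe_toFinset {α : Type*} [DecidableEq α] {l l' : List α}
    (h : l ⊆ l') : (↑l.toFinset : Set α) ⊆ ↑l'.toFinset :=
  fun _ hx => by simpa using h (by simpa using hx)

lemma List.getElem_mem_drop {α : Type*} {l : List α} {k p : ℕ} (hkp : k ≤ p)
    (hp : p < l.length) : l[p] ∈ l.drop k :=
  List.drop_subset_drop_left l hkp (by rw [List.drop_eq_getElem_cons hp]; exact List.mem_cons_self)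

lemma List.toFinset_append_cons {α : Type*} [DecidableEq α] (A B : List α) (x : α) :
    (A ++ x :: B).toFinset = insert x (A ++ B).toFinset := by
  ext; simp only [List.mem_toFinset, List.mem_append, List.mem_cons, Finset.mem_insert]; tauto

lemma neg_one_pow_add_neg_one_pow_eq_zero {R : Type*} [Ring R] {a b : ℕ} (h : Odd (a + b)) :
    (-1 : R) ^ a + (-1) ^ b = 0 := by
  have hb : (-1 : R) ^ b = -(-1) ^ a := by
    calc (-1 : R) ^ b = (-1) ^ a * ((-1) ^ a * (-1) ^ b) := by
          rw [← mul_assoc, ← pow_add, Even.neg_one_pow ⟨a, rfl⟩, one_mul]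
      _ = -(-1) ^ a := by rw [← pow_add, h.neg_one_pow, mul_neg_one]
  rw [hb, add_neg_cancel]

section Model

variable {n : ℕ} {K : Type*} [Field K] (β : Fin n → Fin n → K)

/-- `e_i e_X = twist β i X • e_{X ∪ {i}}` when `i ∉ X`: moving `e_i` past each `e_j` with
`j < i` costs `β j i`. -/
def twist (i : Fin n) (X : Finset (Fin n)) : K :=
  ∏ j ∈ X, if j < i then β j i else 1

noncomputable def genOp (i : Fin n) : Module.End K (Finset (Fin n) →₀ K) :=
  Finsupp.lsum K fun X =>
    if i ∈ X then 0 else twist β i X • Finsupp.lsingle (insert i X)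

lemma genOp_single (i : Fin n) (X : Finset (Fin n)) (a : K) :
    genOp β i (Finsupp.single X a) =
      if i ∈ X then 0 else Finsupp.single (insert i X) (twist β i X * a) := by
  by_cases h : i ∈ X <;> simp [genOp, h, Finsupp.smul_single]

lemma genOp_mul_self (i : Fin n) : genOp β i * genOp β i = 0 := by
  refine Finsupp.lhom_ext fun X a => ?_
  by_cases h : i ∈ X <;> simp only [Module.End.mul_apply, genOp_single, h, if_true, if_false,
    map_zero, Finset.mem_insert_self, LinearMap.zero_apply]

lemma twist_insert {i j : Fin n} {X : Finset (Fin n)} (hj : j ∉ X) :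
    twist β i (insert j X) = (if j < i then β j i else 1) * twist β i X :=
  Finset.prod_insert hj

lemma genOp_mul_genOp {i j : Fin n} (h : i < j) :
    genOp β j * genOp β i = β i j • (genOp β i * genOp β j) := by
  refine Finsupp.lhom_ext fun X a => ?_
  have hji : ¬ j < i := h.asymm
  by_cases hi : i ∈ X <;> by_cases hj : j ∈ X <;>
    simp only [Module.End.mul_apply, LinearMap.smul_apply, genOp_single, hi, hj, if_true,
      if_false, map_zero, smul_zero, Finset.mem_insert, h.ne, h.ne', or_true,
      false_or, Finsupp.smul_single, Finset.insert_comm i j, smul_eq_mul]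
  rw [twist_insert β hi, twist_insert β hj, if_pos h, if_neg hji]
  congr 1
  ring

noncomputable def rep : EAlg n K β →ₐ[K] Module.End K (Finset (Fin n) →₀ K) :=
  RingQuot.liftAlgHom K ⟨FreeAlgebra.lift K (genOp β), fun _ _ h => by
    induction h with
    | sq i => simp [genOp_mul_self]
    | comm h => simp [genOp_mul_genOp β h]⟩

lemma rep_gen (i : Fin n) : rep β (gen β i) = genOp β i := by
  simp [rep, gen]

/-- The coordinates of `z` in the spanning family `(e_X)`, read off as `z • δ_∅`. -/
noncomputable def coeffs : EAlg n K β →ₗ[K] Finset (Fin n) →₀ K :=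
  LinearMap.applyₗ (Finsupp.single ∅ 1) ∘ₗ (rep β).toLinearMap

lemma coeffs_mul (y z : EAlg n K β) : coeffs β (y * z) = rep β y (coeffs β z) := by
  simp [coeffs]

lemma rep_prod_single (l : List (Fin n)) (Z : Finset (Fin n)) :
    ∃ γ : K, rep β (l.map (gen β)).prod (Finsupp.single Z 1) =
      Finsupp.single (l.toFinset ∪ Z) γ ∧ (¬ Disjoint l.toFinset Z → γ = 0) := by
  induction l with
  | nil => exact ⟨1, by simp, fun h => (h (Finset.disjoint_empty_left Z)).elim⟩
  | cons x t ih =>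
    obtain ⟨γ, hγ, hγ0⟩ := ih
    simp only [List.map_cons, List.prod_cons, map_mul, Module.End.mul_apply, hγ, rep_gen,
      genOp_single, List.toFinset_cons, Finset.insert_union]
    split_ifs with hx
    · exact ⟨0, by simp, fun _ => rfl⟩
    · refine ⟨twist β x (t.toFinset ∪ Z) * γ, rfl, fun hd => ?_⟩
      rw [Finset.mem_union, not_or] at hx
      rw [hγ0 (mt (fun ht => Finset.disjoint_insert_left.2 ⟨hx.2, ht⟩) hd), mul_zero]

lemma rep_prod_single_empty_of_pairwise {l : List (Fin n)} (hl : l.Pairwise (· < ·)) :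
    rep β (l.map (gen β)).prod (Finsupp.single ∅ 1) = Finsupp.single l.toFinset 1 := by
  induction l with
  | nil => simp
  | cons x t ih =>
    rw [List.pairwise_cons] at hl
    have hx : x ∉ t.toFinset := fun h => (hl.1 x (List.mem_toFinset.1 h)).false
    have htwist : twist β x t.toFinset = 1 :=
      Finset.prod_eq_one fun j hj => if_neg (hl.1 j (List.mem_toFinset.1 hj)).asymm
    simp [map_mul, ih hl.2, rep_gen, genOp_single, hx, htwist]

lemma coeffs_eset (X : Finset (Fin n)) : coeffs β (eset β X) = Finsupp.single X 1 := by
  simpa [coeffs, eset] using rep_prod_single_empty_of_pairwise β X.sortedLT_sort.pairwise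

lemma coeffs_eset_mul_eset (X Z : Finset (Fin n)) :
    ∃ γ : K, coeffs β (eset β X * eset β Z) = Finsupp.single (X ∪ Z) γ ∧
      (¬ Disjoint X Z → γ = 0) := by
  rw [coeffs_mul, coeffs_eset]
  simpa [eset] using rep_prod_single β (X.sort (· ≤ ·)) Z

lemma coeffs_mul_eq_sum (y z : EAlg n K β) :
    coeffs β (y * z) = (coeffs β z).sum fun Z b => b • coeffs β (y * eset β Z) := by
  conv_lhs => rw [coeffs_mul, ← (coeffs β z).sum_single]
  refine (map_finsuppSum _ _ _).trans (Finsupp.sum_congr fun Z _ => ?_)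
  rw [coeffs_mul, coeffs_eset, ← map_smul, Finsupp.smul_single_one]

noncomputable def weightFun (w : Finset (Fin n) → K) : EAlg n K β →ₗ[K] K :=
  Finsupp.linearCombination K w ∘ₗ coeffs β

variable {β} {w : Finset (Fin n) → K}

lemma weightFun_eset (X : Finset (Fin n)) : weightFun β w (eset β X) = w X := by
  simp [weightFun, coeffs_eset]

lemma weightFun_eset_mul_eset_eq_zero {X Z : Finset (Fin n)}
    (h : Disjoint X Z → w (X ∪ Z) = 0) : weightFun β w (eset β X * eset β Z) = 0 := by
  obtain ⟨γ, hγ, hγ0⟩ := coeffs_eset_mul_eset β X Z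
  rw [weightFun, LinearMap.comp_apply, hγ, Finsupp.linearCombination_single, smul_eq_mul]
  by_cases hd : Disjoint X Z
  · rw [h hd, mul_zero]
  · rw [hγ0 hd, zero_mul]

lemma weightFun_mul_eq_zero {y : EAlg n K β} (h : ∀ Z, weightFun β w (y * eset β Z) = 0)
    (z : EAlg n K β) : weightFun β w (y * z) = 0 := by
  rw [weightFun, LinearMap.comp_apply, coeffs_mul_eq_sum, map_finsuppSum]
  refine Finset.sum_eq_zero fun Z _ => ?_
  simpa [weightFun] using Or.inr (h Z)

lemma bdry_eq_sum (χ : Finset (Fin n) → K) (X : Finset (Fin n)) :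
    bdry β χ X = ∑ x ∈ X,
      ((-1 : K) ^ ((X.filter (· < x)).card + 1) * χ (X.erase x)) • eset β (X.erase x) := by
  rw [bdry, List.sum_map_zipIdx_of_pairwise X.sortedLT_sort.pairwise, Finset.sort_toFinset]
  refine Finset.sum_congr rfl fun x _ => ?_
  rw [(X.sort_nodup _).countP_eq_card_filter, Finset.sort_toFinset]

lemma weightFun_bdry (χ : Finset (Fin n) → K) (X : Finset (Fin n)) :
    weightFun β w (bdry β χ X) = ∑ x ∈ X,
      (-1 : K) ^ ((X.filter (· < x)).card + 1) * χ (X.erase x) * w (X.erase x) := by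
  simp [bdry_eq_sum, weightFun_eset, mul_assoc]

lemma eset_singleton (i : Fin n) : eset β {i} = gen β i := by
  simp [eset]

end Model

section MatroidFacts
variable {n : ℕ} {M : Matroid (Fin n)}

lemma isCircuit_iff_coe {C : Finset (Fin n)} : IsCircuit M C ↔ M.IsCircuit ↑C := by
  rw [Matroid.isCircuit_iff_forall_ssubset, IsCircuit]
  refine and_congr_right fun hC =>
    ⟨fun h I hI => ?_, fun h D hD => (h (by simpa using hD)).not_dep⟩
  lift I to Finset (Fin n) using (C.finite_toSet.subset hI.subset)
  rw [← Matroid.not_dep_iff (hI.subset.trans hC.subset_ground)]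
  exact h I (by simpa using hI)

lemma exists_isCircuit_of_not_unidep (hE : M.E = Set.univ) {C Z : Finset (Fin n)}
    (hC : IsCircuit M C) (hCZ : ¬ Unidep M (C ∪ Z)) :
    ∃ C' ⊆ C ∪ Z, IsCircuit M C' ∧ C' ≠ C := by
  by_contra! h
  exact hCZ ⟨hE ▸ Set.subset_univ _, C, ⟨Finset.subset_union_left, hC⟩,
    fun C' hC' => h C' hC'.1 hC'.2⟩

/-- If `c ∉ Z`, then `C ∪ Z` contains a second circuit, and eliminating `c` between the two
leaves a circuit inside `(C ∪ Z) \ {c}`. -/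
lemma not_indep_erase_union (hE : M.E = Set.univ) {C Z : Finset (Fin n)} (hC : IsCircuit M C)
    {c : Fin n} (hc : c ∈ C) (hd : Disjoint (C.erase c) Z)
    (hCZ : ¬ (Disjoint C Z ∧ Unidep M (C ∪ Z))) : ¬ M.Indep ↑(C.erase c ∪ Z) := by
  intro hind
  by_cases hcZ : c ∈ Z
  · refine (isCircuit_iff_coe.1 hC).not_indep (hind.subset fun x hx => ?_)
    by_cases hxc : x = c <;> simp_all
  · have hdisj : Disjoint C Z := by
      rwa [← Finset.insert_erase hc, Finset.disjoint_insert_left, and_iff_right hcZ]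
    obtain ⟨C', hC'sub, hC', hne⟩ := exists_isCircuit_of_not_unidep hE hC (hCZ ⟨hdisj, ·⟩)
    obtain ⟨D, hDsub, hD⟩ := (isCircuit_iff_coe.1 hC').elimination (isCircuit_iff_coe.1 hC)
      (by exact_mod_cast hne) c
    have hsub : (↑C' ∪ ↑C) \ {c} ⊆ (↑(C.erase c ∪ Z) : Set (Fin n)) := by
      rw [← Finset.erase_eq_of_notMem hcZ, ← Finset.erase_union_distrib, Finset.coe_erase]
      refine Set.sdiff_subset_sdiff_left (Set.union_subset ?_ ?_)
      · exact_mod_cast hC'sub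
      · exact_mod_cast Finset.subset_union_left
    exact hD.not_indep (hind.subset (hDsub.trans hsub))

lemma unidep_of_isCircuit (hE : M.E = Set.univ) {C : Finset (Fin n)} (hC : IsCircuit M C) :
    Unidep M C :=
  ⟨hE ▸ Set.subset_univ _, C, ⟨subset_rfl, hC⟩, fun _ h => by
    exact_mod_cast ((isCircuit_iff_coe.1 h.2).eq_of_subset_isCircuit (isCircuit_iff_coe.1 hC)
      (by exact_mod_cast h.1))⟩

lemma Unidep.not_isLoop {U C : Finset (Fin n)} (hU : Unidep M U) (hCU : C ⊆ U)
    (hC : IsCircuit M C) (hCcard : 1 < C.card) {u : Fin n} (hu : u ∈ U) : ¬ M.IsLoop u := by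
  intro hloop
  obtain ⟨C₀, -, huniq⟩ := hU.2
  have hu' : IsCircuit M {u} :=
    isCircuit_iff_coe.2 (by simpa using Matroid.singleton_isCircuit.2 hloop)
  have : ({u} : Finset (Fin n)) = C :=
    (huniq _ ⟨Finset.singleton_subset_iff.2 hu, hu'⟩).trans (huniq C ⟨hCU, hC⟩).symm
  simp [← this] at hCcard

end MatroidFacts

section Ideal
variable {n : ℕ} {K : Type*} [Field K] {β : Fin n → Fin n → K} {M : Matroid (Fin n)}
  {χ : Finset (Fin n) → K}

lemma chiIdeal_le_ker_weightFun (hE : M.E = Set.univ) (h2 : UC2 β M χ)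
    {w : Finset (Fin n) → K} (hw : ∀ X : Finset (Fin n), ¬ M.Indep ↑X → w X = 0)
    (hbd : ∀ U C, Unidep M U → C ⊆ U → IsCircuit M C → 1 < C.card →
      weightFun β w (bdry β χ U) = 0) :
    chiIdeal β M χ ≤ LinearMap.ker (weightFun β w) := by
  rw [chiIdeal, Submodule.span_le]
  rintro _ (⟨C, hC, hCcard, z, rfl⟩ | ⟨i, hi, z, rfl⟩) <;>
    refine weightFun_mul_eq_zero (fun Z => ?_) z
  · by_cases hCZ : Disjoint C Z ∧ Unidep M (C ∪ Z)
    · obtain ⟨ε, hε, heq⟩ :=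
        h2 _ _ hCZ.2 (unidep_of_isCircuit hE hC) Finset.subset_union_left
      have := hbd _ C hCZ.2 Finset.subset_union_left hC hCcard
      rwa [heq, Finset.union_sdiff_cancel_left hCZ.1, map_smul, smul_eq_mul, mul_eq_zero,
        or_iff_right hε] at this
    · rw [bdry_eq_sum, Finset.sum_mul, map_sum]
      refine Finset.sum_eq_zero fun c hc => ?_
      rw [smul_mul_assoc, map_smul, weightFun_eset_mul_eset_eq_zero
        (fun hd => hw _ (not_indep_erase_union hE hC hc hd hCZ)), smul_zero]
  · rw [← eset_singleton]
    exact weightFun_eset_mul_eset_eq_zero fun _ => hw _ fun h =>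
      (isCircuit_iff_coe.1 hi).not_indep (h.subset (by simp))

end Ideal

section Flags
variable {n : ℕ} {M : Matroid (Fin n)} {l l' : List (Fin n)}

lemma flagOf_cons (a : Fin n) (t : List (Fin n)) :
    flagOf M (a :: t) = M.closure ↑(a :: t).toFinset :: flagOf M t := rfl

lemma length_eq_of_flagOf_eq (h : flagOf M l = flagOf M l') : l.length = l'.length := by
  simpa [flagOf] using congrArg List.length h

lemma closure_drop_eq_of_flagOf_eq_s17 (h : flagOf M l = flagOf M l') (k : ℕ) :
    M.closure ↑(l.drop k).toFinset = M.closure ↑(l'.drop k).toFinset := by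
  induction l generalizing l' k with
  | nil => rw [List.eq_nil_of_length_eq_zero (length_eq_of_flagOf_eq h).symm]
  | cons a t ih =>
    obtain ⟨b, s, rfl⟩ := List.exists_cons_of_length_eq_add_one (length_eq_of_flagOf_eq h).symm
    rw [flagOf_cons, flagOf_cons, List.cons.injEq] at h
    cases k with
    | zero => exact h.1
    | succ k => exact ih h.2 k

lemma flagOf_append_congr (A : List (Fin n)) (h : flagOf M l = flagOf M l') :
    flagOf M (A ++ l) = flagOf M (A ++ l') := by
  induction A with
  | nil => exact h
  | cons a A ih =>
    rw [List.cons_append, List.cons_append, flagOf_cons, flagOf_cons, ih]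
    simpa using M.closure_insert_congr_right (e := a) (closure_drop_eq_of_flagOf_eq_s17 ih 0)

lemma indep_of_flagOf_eq (h : flagOf M l = flagOf M l') (hnd : l.Nodup) (hnd' : l'.Nodup)
    (hind' : M.Indep ↑l'.toFinset) : M.Indep ↑l.toFinset := by
  have hcl := closure_drop_eq_of_flagOf_eq_s17 h 0
  rw [List.drop_zero, List.drop_zero] at hcl
  rw [Matroid.indep_iff_eRk_eq_encard_of_finite (Finset.finite_toSet _), ← M.eRk_closure_eq,
    hcl, M.eRk_closure_eq, hind'.eRk_eq_encard, Set.encard_coe_eq_coe_finsetCard,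
    Set.encard_coe_eq_coe_finsetCard, List.toFinset_card_of_nodup hnd,
    List.toFinset_card_of_nodup hnd', length_eq_of_flagOf_eq h]

def InLayer (M : Matroid (Fin n)) (l : List (Fin n)) (k : ℕ) (e : Fin n) : Prop :=
  e ∈ M.closure ↑(l.drop k).toFinset ∧ e ∉ M.closure ↑(l.drop (k + 1)).toFinset

lemma inLayer_congr (h : flagOf M l = flagOf M l') : InLayer M l = InLayer M l' := by
  ext k e
  rw [InLayer, InLayer, closure_drop_eq_of_flagOf_eq_s17 h, closure_drop_eq_of_flagOf_eq_s17 h]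

lemma getElem_notMem_closure_drop_succ (hnd : l.Nodup) (hind : M.Indep ↑l.toFinset) {p : ℕ}
    (hp : p < l.length) : l[p] ∉ M.closure ↑(l.drop (p + 1)).toFinset := by
  have hsuffix := hnd.sublist (List.drop_sublist p l)
  rw [List.drop_eq_getElem_cons hp, List.nodup_cons] at hsuffix
  refine fun hmem => hind.notMem_closure_sdiff_of_mem (by simp) (M.closure_subset_closure ?_ hmem)
  intro x hx
  simp only [Set.mem_sdiff, Finset.mem_coe, List.mem_toFinset] at hx ⊢
  exact ⟨List.drop_subset _ _ hx, fun hxp => hsuffix.1 (by simp_all)⟩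

lemma inLayer_getElem (hnd : l.Nodup) (hind : M.Indep ↑l.toFinset) {p : ℕ} (hp : p < l.length) :
    InLayer M l p l[p] :=
  ⟨M.mem_closure_of_mem (by simpa using List.getElem_mem_drop le_rfl hp)
    ((List.coe_toFinset_subset_coe_toFinset (List.drop_subset p l)).trans hind.subset_ground),
    getElem_notMem_closure_drop_succ hnd hind hp⟩

lemma eq_of_inLayer_getElem (hnd : l.Nodup) (hind : M.Indep ↑l.toFinset) {k p : ℕ}
    (hp : p < l.length) (h : InLayer M l k l[p]) : p = k := by
  refine le_antisymm (not_lt.1 fun hkp => h.2 ?_) (not_lt.1 fun hpk => ?_)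
  · exact M.mem_closure_of_mem (by simpa using List.getElem_mem_drop hkp hp)
      ((List.coe_toFinset_subset_coe_toFinset (List.drop_subset _ l)).trans hind.subset_ground)
  · exact getElem_notMem_closure_drop_succ hnd hind hp (M.closure_subset_closure
      (List.coe_toFinset_subset_coe_toFinset (List.drop_subset_drop_left l hpk)) h.1)

lemma eq_of_inLayer (hnd : l.Nodup) (hind : M.Indep ↑l.toFinset) {k : ℕ} {x y : Fin n}
    (hx : x ∈ l) (hy : y ∈ l) (hxk : InLayer M l k x) (hyk : InLayer M l k y) : x = y := by
  obtain ⟨p, hp, rfl⟩ := List.getElem_of_mem hx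
  obtain ⟨q, hq, rfl⟩ := List.getElem_of_mem hy
  obtain rfl := (eq_of_inLayer_getElem hnd hind hp hxk).trans
    (eq_of_inLayer_getElem hnd hind hq hyk).symm
  rfl

lemma eq_of_flagOf_eq_of_toFinset_eq (hnd : l.Nodup) (hnd' : l'.Nodup)
    (hind : M.Indep ↑l.toFinset) (h : flagOf M l = flagOf M l') (hs : l.toFinset = l'.toFinset) :
    l = l' := by
  refine List.ext_getElem (length_eq_of_flagOf_eq h) fun p hp hp' => ?_
  refine eq_of_inLayer hnd hind (List.getElem_mem hp) ?_ (inLayer_getElem hnd hind hp) ?_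
  · rw [← List.mem_toFinset, hs, List.mem_toFinset]
    exact List.getElem_mem hp'
  · rw [inLayer_congr h]
    exact inLayer_getElem hnd' (hs ▸ hind) hp'

lemma exists_append_cons_of_mem_closure {u : Fin n} (hu : u ∈ M.closure ↑l.toFinset)
    (hloop : ¬ M.IsLoop u) :
    ∃ A w B, l = A ++ w :: B ∧
      u ∈ M.closure (insert w ↑B.toFinset) \ M.closure ↑B.toFinset := by
  induction l with
  | nil => exact (hloop (by simpa [Matroid.closure_empty, Matroid.isLoop_iff] using hu)).elim
  | cons a t ih =>
    by_cases ht : u ∈ M.closure ↑t.toFinset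
    · obtain ⟨A, w, B, rfl, h⟩ := ih ht
      exact ⟨a :: A, w, B, rfl, h⟩
    · exact ⟨[], a, t, rfl, by simpa using hu, ht⟩

lemma flagOf_append_cons_swap {A B : List (Fin n)} {u w : Fin n}
    (h : u ∈ M.closure (insert w ↑B.toFinset) \ M.closure ↑B.toFinset) :
    flagOf M (A ++ u :: B) = flagOf M (A ++ w :: B) := by
  refine flagOf_append_congr A ?_
  rw [flagOf_cons, flagOf_cons, List.toFinset_cons, List.toFinset_cons, Finset.coe_insert,
    Finset.coe_insert, M.closure_insert_congr h]

end Flags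

section Inversions
variable {n : ℕ}

lemma listInv_cons (a : Fin n) (t : List (Fin n)) :
    listInv (a :: t) = t.countP (· < a) + listInv t := rfl

lemma listInv_append_cons (A B : List (Fin n)) (x : Fin n) :
    listInv (A ++ x :: B) = listInv (A ++ B) + B.countP (· < x) + A.countP (x < ·) := by
  induction A with
  | nil => simp [listInv_cons, add_comm]
  | cons a A ih =>
    simp only [List.cons_append, listInv_cons, ih, List.countP_append, List.countP_cons]
    omega

lemma countP_lt_add_countP_gt {A : List (Fin n)} {x : Fin n} (hx : x ∉ A) :
    A.countP (· < x) + A.countP (x < ·) = A.length := by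
  rw [List.length_eq_countP_add_countP (· < x) (l := A)]
  congr 1
  refine List.countP_congr fun a ha => ?_
  rcases lt_or_gt_of_ne (ne_of_mem_of_not_mem ha hx) with h | h <;>
    simp [h, h.asymm]

lemma odd_listInv_add_listInv_swap {A B : List (Fin n)} {u w : Fin n}
    (h : (u :: (A ++ w :: B)).Nodup) :
    Odd (listInv (u :: (A ++ w :: B)) + listInv (w :: (A ++ u :: B))) := by
  simp only [List.nodup_cons, List.mem_append, List.mem_cons, not_or] at h
  have hu := countP_lt_add_countP_gt h.1.1
  have hw := countP_lt_add_countP_gt (List.disjoint_of_nodup_append h.2 · List.mem_cons_self)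
  simp only [listInv_cons, listInv_append_cons, List.countP_append, List.countP_cons]
  rcases lt_or_gt_of_ne h.1.2.1 with huw | hwu
  · simp [huw, huw.asymm, Nat.odd_iff]; omega
  · simp [hwu, hwu.asymm, Nat.odd_iff]; omega

lemma listInv_eq_zero_of_pairwise {l : List (Fin n)} (hl : l.Pairwise (· ≤ ·)) :
    listInv l = 0 := by
  induction l with
  | nil => rfl
  | cons a t ih =>
    rw [List.pairwise_cons] at hl
    rw [listInv_cons, ih hl.2, List.countP_eq_zero.2 fun b hb => by simpa using hl.1 b hb]

variable {K : Type*} [Field K]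

lemma ochi_sort (χ : Finset (Fin n) → K) (X : Finset (Fin n)) :
    ochi χ (X.sort (· ≤ ·)) = χ X := by
  rw [ochi, listInv_eq_zero_of_pairwise (X.pairwise_sort _), pow_zero, one_mul,
    Finset.sort_toFinset]

end Inversions

section FlagWeight
variable {n : ℕ} {K : Type*} [Field K] {M : Matroid (Fin n)} {χ : Finset (Fin n) → K}

def IsFlagOrdering (M : Matroid (Fin n)) (r : List (Fin n)) (X : Finset (Fin n))
    (l : List (Fin n)) : Prop :=
  l.Nodup ∧ l.toFinset = X ∧ flagOf M l = flagOf M r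

open Classical in
/-- `χ(X^τ)⁻¹` for the ordering `X^τ` of `X` with `Flag(X^τ) = Flag(r)`, which is unique when
`r` is independent (`eq_of_isFlagOrdering`), and `0` if there is none. -/
noncomputable def flagWeight (M : Matroid (Fin n)) (χ : Finset (Fin n) → K) (r : List (Fin n))
    (X : Finset (Fin n)) : K :=
  if h : ∃ l, IsFlagOrdering M r X l then (ochi χ h.choose)⁻¹ else 0

variable {r : List (Fin n)} {X : Finset (Fin n)} {l : List (Fin n)}

lemma ochi_ne_zero (h1 : UC1 M χ) (hl : M.Indep ↑l.toFinset) : ochi χ l ≠ 0 :=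
  mul_ne_zero (pow_ne_zero _ (neg_ne_zero.2 one_ne_zero)) ((h1 _).2 hl)

lemma IsFlagOrdering.indep (hr : r.Nodup) (hri : M.Indep ↑r.toFinset)
    (hl : IsFlagOrdering M r X l) : M.Indep ↑l.toFinset :=
  indep_of_flagOf_eq hl.2.2 hl.1 hr hri

lemma eq_of_isFlagOrdering (hr : r.Nodup) (hri : M.Indep ↑r.toFinset) {l' : List (Fin n)}
    (hl : IsFlagOrdering M r X l) (hl' : IsFlagOrdering M r X l') : l = l' :=
  eq_of_flagOf_eq_of_toFinset_eq hl.1 hl'.1 (hl.indep hr hri) (hl.2.2.trans hl'.2.2.symm)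
    (hl.2.1.trans hl'.2.1.symm)

lemma flagWeight_eq (hr : r.Nodup) (hri : M.Indep ↑r.toFinset) (hl : IsFlagOrdering M r X l) :
    flagWeight M χ r X = (ochi χ l)⁻¹ := by
  have h : ∃ l, IsFlagOrdering M r X l := ⟨l, hl⟩
  rw [flagWeight, dif_pos h, eq_of_isFlagOrdering hr hri h.choose_spec hl]

lemma flagWeight_eq_zero (h : ∀ l, ¬ IsFlagOrdering M r X l) : flagWeight M χ r X = 0 :=
  dif_neg (not_exists.2 h)

lemma flagWeight_ne_zero_iff (h1 : UC1 M χ) (hr : r.Nodup) (hri : M.Indep ↑r.toFinset) :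
    flagWeight M χ r X ≠ 0 ↔ ∃ l, IsFlagOrdering M r X l := by
  refine ⟨fun h => by_contra fun hX => h (flagWeight_eq_zero (not_exists.1 hX)), ?_⟩
  rintro ⟨l, hl⟩
  rw [flagWeight_eq hr hri hl]
  exact inv_ne_zero (ochi_ne_zero h1 (hl.indep hr hri))

end FlagWeight

section Pairing
variable {n : ℕ} {K : Type*} [Field K] {M : Matroid (Fin n)} {χ : Finset (Fin n) → K}
  {r : List (Fin n)} {U : Finset (Fin n)} {A B : List (Fin n)} {u w : Fin n}

lemma isFlagOrdering_swap (hu : u ∈ U) (hl : IsFlagOrdering M r (U.erase u) (A ++ w :: B))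
    (hex : u ∈ M.closure (insert w ↑B.toFinset) \ M.closure ↑B.toFinset) :
    IsFlagOrdering M r (U.erase w) (A ++ u :: B) := by
  obtain ⟨hnd, hset, hflag⟩ := hl
  rw [List.nodup_middle, List.nodup_cons] at hnd
  rw [List.toFinset_append_cons] at hset
  have hu' : u ∉ (A ++ B).toFinset := fun h => by
    simpa using (hset ▸ Finset.mem_insert_of_mem h : u ∈ U.erase u)
  have huw : u ≠ w := fun h => by
    simpa [h] using (hset ▸ Finset.mem_insert_self w _ : w ∈ U.erase u)
  refine ⟨List.nodup_middle.2 (List.nodup_cons.2 ⟨by simpa using hu', hnd.2⟩), ?_,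
    (flagOf_append_cons_swap hex).trans hflag⟩
  calc (A ++ u :: B).toFinset = (insert u (insert w (A ++ B).toFinset)).erase w := by
        rw [Finset.erase_insert_of_ne huw, Finset.erase_insert (by simpa using hnd.1),
          List.toFinset_append_cons]
    _ = U.erase w := by rw [hset, Finset.insert_erase hu]

/-- `u` and `w` both enter the common flag at step `|A|`, while an independent ordering adds a
single element at each step. -/
lemma not_isFlagOrdering_erase (hr : r.Nodup) (hri : M.Indep ↑r.toFinset) (hu : u ∈ U)
    (hl : IsFlagOrdering M r (U.erase u) (A ++ w :: B))
    (hex : u ∈ M.closure (insert w ↑B.toFinset) \ M.closure ↑B.toFinset) {x : Fin n}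
    (hxu : x ≠ u) (hxw : x ≠ w) (l : List (Fin n)) : ¬ IsFlagOrdering M r (U.erase x) l := by
  intro hl'
  have hwU : w ∈ U.erase u := hl.2.1 ▸ List.mem_toFinset.2 (by simp)
  have hmem : ∀ y ∈ U, y ≠ x → y ∈ l := fun y hy hyx => by
    rw [← List.mem_toFinset, hl'.2.1]
    exact Finset.mem_erase.2 ⟨hyx, hy⟩
  have hlayer : InLayer M l = InLayer M (A ++ w :: B) := inLayer_congr (hl'.2.2.trans hl.2.2.symm)
  refine (Finset.mem_erase.1 hwU).1 (eq_of_inLayer (k := A.length) hl'.1 (hl'.indep hr hri)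
    (hmem w (Finset.mem_of_mem_erase hwU) hxw.symm) (hmem u hu hxu.symm) ?_ ?_)
  · rw [hlayer]
    simpa using inLayer_getElem hl.1 (hl.indep hr hri) (p := A.length) (by simp)
  · rw [hlayer]
    simpa [InLayer, List.drop_left'] using hex

lemma boundary_term_eq (h1 : UC1 M χ) (hr : r.Nodup) (hri : M.Indep ↑r.toFinset)
    {l : List (Fin n)} (hl : IsFlagOrdering M r (U.erase u) l) :
    (-1 : K) ^ ((U.filter (· < u)).card + 1) * χ (U.erase u) * flagWeight M χ r (U.erase u) =
      -(-1) ^ listInv (u :: l) := by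
  have hχ : χ (U.erase u) ≠ 0 := (h1 _).2 (hl.2.1 ▸ hl.indep hr hri)
  have hcount : (U.filter (· < u)).card = l.countP (· < u) := by
    rw [hl.1.countP_eq_card_filter, hl.2.1, Finset.filter_erase,
      Finset.erase_eq_of_notMem (by simp)]
  rw [flagWeight_eq hr hri hl, ochi, hl.2.1, hcount, listInv_cons, mul_inv, ← inv_pow,
    inv_neg_one]
  field_simp
  ring

lemma sum_flagWeight_erase_eq_zero (h1 : UC1 M χ) (hr : r.Nodup) (hri : M.Indep ↑r.toFinset)
    (hU : M.Dep ↑U) (hloop : ∀ u ∈ U, ¬ M.IsLoop u) :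
    ∑ x ∈ U, (-1 : K) ^ ((U.filter (· < x)).card + 1) * χ (U.erase x) *
      flagWeight M χ r (U.erase x) = 0 := by
  by_cases hsurv : ∃ u ∈ U, ∃ l, IsFlagOrdering M r (U.erase u) l
  swap
  · exact Finset.sum_eq_zero fun x hx => by
      rw [flagWeight_eq_zero fun l hl => hsurv ⟨x, hx, l, hl⟩, mul_zero]
  obtain ⟨u, hu, l, hl⟩ := hsurv
  have hucl : u ∈ M.closure ↑l.toFinset := by
    refine ((hl.indep hr hri).mem_closure_iff).2 (Or.inl ?_)
    rwa [hl.2.1, Finset.coe_erase, Set.insert_sdiff_singleton, Set.insert_eq_of_mem hu]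
  obtain ⟨A, w, B, rfl, hex⟩ := exists_append_cons_of_mem_closure hucl (hloop u hu)
  have hwU : w ∈ U.erase u := hl.2.1 ▸ List.mem_toFinset.2 (by simp)
  have hnd : (u :: (A ++ w :: B)).Nodup :=
    List.nodup_cons.2 ⟨fun h => by simpa [hl.2.1] using List.mem_toFinset.2 h, hl.1⟩
  rw [Finset.sum_eq_add_of_mem u w hu (Finset.mem_of_mem_erase hwU)
      (Finset.ne_of_mem_erase hwU).symm fun x _ hx => by
        rw [flagWeight_eq_zero (not_isFlagOrdering_erase hr hri hu hl hex hx.1 hx.2), mul_zero],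
    boundary_term_eq h1 hr hri hl, boundary_term_eq h1 hr hri (isFlagOrdering_swap hu hl hex),
    ← neg_add, neg_one_pow_add_neg_one_pow_eq_zero (odd_listInv_add_listInv_swap hnd), neg_zero]

end Pairing

section NBC
variable {n : ℕ} {M : Matroid (Fin n)}

lemma NBCSet.subset {X Y : Finset (Fin n)} (hX : NBCSet M X) (hYX : Y ⊆ X) : NBCSet M Y :=
  ⟨hX.1.subset (Finset.coe_subset.2 hYX), fun B hB => hX.2 B (hB.trans hYX)⟩

/-- Otherwise a circuit in `X ∪ {a}` through `a` would have minimum `a` and leave a broken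
circuit in `X`. -/
lemma NBCSet.exists_le_of_mem_closure {X : Finset (Fin n)} (hX : NBCSet M X) {a : Fin n}
    (ha : a ∈ M.closure ↑X) (hloop : ¬ M.IsLoop a) : ∃ x ∈ X, x ≤ a := by
  by_contra! hlt
  have haX : a ∉ X := fun h => (hlt a h).false
  obtain ⟨C, hCsub, hC, haC⟩ := Matroid.exists_isCircuit_of_mem_closure ha (by simpa using haX)
  lift C to Finset (Fin n) using C.toFinite
  rw [Finset.mem_coe] at haC
  have hmem : ∀ x ∈ C, x = a ∨ x ∈ X := fun x hx => by simpa using hCsub hx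
  have hcard : 1 < C.card := by
    by_contra! h
    have hCa : C = {a} := Finset.eq_singleton_iff_unique_mem.2
      ⟨haC, fun x hx => Finset.card_le_one.1 h x hx a haC⟩
    exact hloop (Matroid.singleton_isCircuit.1 (by simpa [hCa] using hC))
  refine hX.2 _ (fun x hx => ?_) ⟨C, a, isCircuit_iff_coe.2 hC, hcard, haC, fun b hb => ?_, rfl⟩
  · exact (hmem x (Finset.mem_of_mem_erase hx)).resolve_left (Finset.ne_of_mem_erase hx)
  · rcases hmem b hb with rfl | hbX
    exacts [le_rfl, (hlt b hbX).le]

/-- At each step both heads are the least non-loop of the common closure. -/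
lemma toFinset_eq_of_flagOf_eq_of_nbcSet {l r : List (Fin n)} (hl : NBCSet M l.toFinset)
    (hr : NBCSet M r.toFinset) (hrs : r.Pairwise (· < ·)) (h : flagOf M l = flagOf M r) :
    l.toFinset = r.toFinset := by
  induction l generalizing r with
  | nil => rw [List.eq_nil_of_length_eq_zero (length_eq_of_flagOf_eq h).symm]
  | cons a t ih =>
    obtain ⟨b, s, rfl⟩ := List.exists_cons_of_length_eq_add_one (length_eq_of_flagOf_eq h).symm
    rw [flagOf_cons, flagOf_cons, List.cons.injEq] at h
    rw [List.pairwise_cons] at hrs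
    have hts : t.toFinset = s.toFinset :=
      ih (hl.subset (by simp)) (hr.subset (by simp)) hrs.2 h.2
    have hmem {x : Fin n} {l : List (Fin n)} (hl : NBCSet M l.toFinset) (hx : x ∈ l) :
        x ∈ M.closure ↑l.toFinset ∧ ¬ M.IsLoop x :=
      ⟨M.mem_closure_of_mem (by simpa using hx) hl.1.subset_ground,
        (hl.1.isNonloop_of_mem (by simpa using hx)).not_isLoop⟩
    obtain ⟨x, hx, hxb⟩ := hl.exists_le_of_mem_closure
      (h.1 ▸ (hmem hr List.mem_cons_self).1) (hmem hr List.mem_cons_self).2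
    obtain ⟨y, hy, hya⟩ := hr.exists_le_of_mem_closure
      (h.1 ▸ (hmem hl List.mem_cons_self).1) (hmem hl List.mem_cons_self).2
    rw [List.toFinset_cons, Finset.mem_insert] at hx hy
    have hab : a ≤ b := by
      rcases hx with rfl | hxt
      · exact hxb
      · exact absurd hxb (not_le.2 (hrs.1 x (by simpa [hts] using hxt)))
    have hba : b ≤ a := by
      rcases hy with rfl | hys
      · exact hya
      · exact (hrs.1 y (by simpa using hys)).le.trans hya
    rw [List.toFinset_cons, List.toFinset_cons, le_antisymm hab hba, hts]

variable {K : Type*} [Field K] {χ : Finset (Fin n) → K}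

lemma flagWeight_sort_of_nbcSet {I X : Finset (Fin n)} (hI : NBCSet M I) (hX : NBCSet M X) :
    flagWeight M χ (I.sort (· ≤ ·)) X = if X = I then (χ I)⁻¹ else 0 := by
  have hri : M.Indep ↑(I.sort (· ≤ ·)).toFinset := by simpa using hI.1
  split_ifs with hXI
  · subst hXI
    rw [flagWeight_eq (X.sort_nodup _) hri ⟨X.sort_nodup _, X.sort_toFinset _, rfl⟩, ochi_sort]
  · refine flagWeight_eq_zero fun l hl => hXI ?_
    have := toFinset_eq_of_flagOf_eq_of_nbcSet (hl.2.1 ▸ hX) (by simpa using hI)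
      I.sortedLT_sort.pairwise hl.2.2
    rwa [hl.2.1, Finset.sort_toFinset] at this

end NBC

section Residue
variable {n : ℕ} {K : Type*} [Field K] {β : Fin n → Fin n → K} {M : Matroid (Fin n)}
  {χ : Finset (Fin n) → K}

lemma exists_linearMap_cls_eq_flagWeight (hE : M.E = Set.univ) (h1 : UC1 M χ) (h2 : UC2 β M χ)
    {r : List (Fin n)} (hr : r.Nodup) (hri : M.Indep ↑r.toFinset) :
    ∃ ψ : AChi β M χ →ₗ[K] K, ∀ X, ψ (cls β M χ X) = flagWeight M χ r X := by
  refine ⟨(chiIdeal β M χ).liftQ _ (chiIdeal_le_ker_weightFun (w := flagWeight M χ r) hE h2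
    (fun X hX => flagWeight_eq_zero fun l hl => hX (hl.2.1 ▸ hl.indep hr hri))
    fun U C hU hCU hC hCcard => ?_), fun X => weightFun_eset X⟩
  rw [weightFun_bdry]
  exact sum_flagWeight_erase_eq_zero h1 hr hri
    ((isCircuit_iff_coe.1 hC).dep.superset (Finset.coe_subset.2 hCU) hU.1)
    fun u hu => hU.not_isLoop hCU hC hCcard hu

lemma flagWeight_sort_eq_of_expansion (hE : M.E = Set.univ) (h1 : UC1 M χ) (h2 : UC2 β M χ)
    {I J : Finset (Fin n)} {ξ : Finset (Fin n) → K} (hsupp : ∀ X, ξ X ≠ 0 → NBCSet M X)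
    (hexp : cls β M χ J = ∑ X : Finset (Fin n), ξ X • cls β M χ X) (hI : NBCSet M I) :
    flagWeight M χ (I.sort (· ≤ ·)) J = ξ I * (χ I)⁻¹ := by
  obtain ⟨ψ, hψ⟩ :=
    exists_linearMap_cls_eq_flagWeight hE h1 h2 (I.sort_nodup (· ≤ ·)) (by simpa using hI.1)
  rw [← hψ, hexp, map_sum, Finset.sum_eq_single I, map_smul, hψ,
    flagWeight_sort_of_nbcSet hI hI, if_pos rfl, smul_eq_mul]
  · intro X _ hXI
    by_cases hX : ξ X = 0
    · rw [hX, zero_smul, map_zero]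
    · rw [map_smul, hψ, flagWeight_sort_of_nbcSet hI (hsupp X hX), if_neg hXI, smul_zero]
  · exact fun h => absurd (Finset.mem_univ I) h

end Residue

open scoped Classical in
theorem nbc_expansion_coeff_general {n : ℕ} {K : Type*} [Field K] (β : Fin n → Fin n → K)
    (M : Matroid (Fin n)) (hE : M.E = Set.univ)
    (χ : Finset (Fin n) → K) (h1 : UC1 M χ) (h2 : UC2 β M χ)
    (ℓ : ℕ) (J : Finset (Fin n))
    (ξ : Finset (Fin n) → K)
    (hsupp : ∀ I : Finset (Fin n), ξ I ≠ 0 → NBCSet M I ∧ I.card = ℓ)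
    (hexp : cls β M χ J = ∑ I : Finset (Fin n), ξ I • cls β M χ I) :
    ∀ I : Finset (Fin n), NBCSet M I → I.card = ℓ →
      ((ξ I ≠ 0 ↔ ∃ lj : List (Fin n), lj.Nodup ∧ lj.toFinset = J ∧
          flagOf M lj = flagOf M (I.sort (· ≤ ·))) ∧
       ∀ lj : List (Fin n), lj.Nodup → lj.toFinset = J →
          flagOf M lj = flagOf M (I.sort (· ≤ ·)) →
         (ξ I = ochi χ (I.sort (· ≤ ·)) / ochi χ lj ∧
          ((χ = fun X : Finset (Fin n) => if M.Indep (↑X : Set (Fin n)) then (1 : K) else 0) →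
            ξ I = (-1 : K) ^ listInv lj))) := by
  intro I hI _
  have hr : (I.sort (· ≤ ·)).Nodup := I.sort_nodup _
  have hri : M.Indep ↑(I.sort (· ≤ ·)).toFinset := by simpa using hI.1
  have hξ := flagWeight_sort_eq_of_expansion hE h1 h2 (fun X h => (hsupp X h).1) hexp hI
  have hχI : χ I ≠ 0 := (h1 I).2 hI.1
  refine ⟨by simpa [hξ, hχI, IsFlagOrdering] using flagWeight_ne_zero_iff h1 hr hri (X := J),
    fun lj hnd hset hflag => ?_⟩
  have hlj : IsFlagOrdering M (I.sort (· ≤ ·)) J lj := ⟨hnd, hset, hflag⟩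
  have hξI : ξ I = ochi χ (I.sort (· ≤ ·)) / ochi χ lj := by
    rw [ochi_sort, div_eq_mul_inv, ← flagWeight_eq hr hri hlj, hξ]
    field_simp
  have hJ : M.Indep ↑J := hset ▸ hlj.indep hr hri
  refine ⟨hξI, fun hOS => ?_⟩
  rw [hξI, ochi_sort, ochi, hset, hOS]
  simp [hI.1, hJ, ← inv_pow]

open scoped Classical in
/-- in the NBC expansion `[e_J] = Σ ξ(I,J)[e_I]`, the coefficient
`ξ(I,J)` is nonzero iff `Flag(I) = Flag(J^τ)` for some ordering `τ` of `J`, in which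
case `ξ(I,J) = χ(I)/χ(J^τ)`; in the Orlik–Solomon case `ξ(I,J) = sgn(τ)`. -/
theorem nbc_expansion_coeff {n : ℕ} {K : Type*} [Field K] (β : Fin n → Fin n → K)
    (hβ : ∀ i j : Fin n, i < j → β i j ≠ 0)
    (M : Matroid (Fin n)) (hE : M.E = Set.univ)
    (χ : Finset (Fin n) → K) (h1 : UC1 M χ) (h2 : UC2 β M χ)
    (ℓ : ℕ) (J : Finset (Fin n)) (hJne : cls β M χ J ≠ 0) (hJc : J.card = ℓ)
    (ξ : Finset (Fin n) → K)
    (hsupp : ∀ I : Finset (Fin n), ξ I ≠ 0 → NBCSet M I ∧ I.card = ℓ)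
    (hexp : cls β M χ J = ∑ I : Finset (Fin n), ξ I • cls β M χ I) :
    ∀ I : Finset (Fin n), NBCSet M I → I.card = ℓ →
      ((ξ I ≠ 0 ↔ ∃ lj : List (Fin n), lj.Nodup ∧ lj.toFinset = J ∧
          flagOf M lj = flagOf M (I.sort (· ≤ ·))) ∧
       ∀ lj : List (Fin n), lj.Nodup → lj.toFinset = J →
          flagOf M lj = flagOf M (I.sort (· ≤ ·)) →
         (ξ I = ochi χ (I.sort (· ≤ ·)) / ochi χ lj ∧
          ((χ = fun X : Finset (Fin n) => if M.Indep (↑X : Set (Fin n)) then (1 : K) else 0) →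
            ξ I = (-1 : K) ^ listInv lj))) :=
  nbc_expansion_coeff_general β M hE χ h1 h2 ℓ J ξ hsupp hexp
end
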